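/- Let (φ_t) be a non-elliptic semigroup in the unit disc 𝔻 with Koenigs function h. If h(𝔻) is a convex subset of ℂ, then the total speed t ↦ v(t) is non-decreasing on [0,+∞). -/

import Mathlib

open Complex Filter Topology Set MeasureTheory

noncomputable section

/-- The unit disc in the complex plane. -/
def unitDisc : Set ℂ := {z : ℂ | ‖z‖ < 1}

/-- The inverse hyperbolic tangent: `arctanh x = (1/2)·log((1+x)/(1−x))`. -/
def arctanh (x : ℝ) : ℝ := (1 / 2) * Real.log ((1 + x) / (1 - x))

/-- The hyperbolic distance on the unit disc:
`k_𝔻(z,w) = arctanh |(z−w)/(1−conj(z)·w)|`. -/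
def kD (z w : ℂ) : ℝ :=
  arctanh (‖(z - w) / (1 - (starRingEnd ℂ) z * w)‖)

/-- `φ` is a continuous one-parameter semigroup of holomorphic self-maps of the unit disc. -/
structure IsDiscSemigroup (φ : ℝ → ℂ → ℂ) : Prop where
  mapsTo : ∀ t : ℝ, 0 ≤ t → Set.MapsTo (φ t) unitDisc unitDisc
  holo : ∀ t : ℝ, 0 ≤ t → DifferentiableOn ℂ (φ t) unitDisc
  id0 : ∀ z ∈ unitDisc, φ 0 z = z
  comp : ∀ s t : ℝ, 0 ≤ s → 0 ≤ t → ∀ z ∈ unitDisc, φ (t + s) z = φ t (φ s z)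
  cont : ContinuousOn (fun p : ℝ × ℂ => φ p.1 p.2) (Set.Ici 0 ×ˢ unitDisc)

/-- A semigroup in the disc is non-elliptic if it has no fixed point in the disc
for positive times. -/
structure IsNonElliptic (φ : ℝ → ℂ → ℂ) extends IsDiscSemigroup φ : Prop where
  noFixedPoint : ∀ t : ℝ, 0 < t → ∀ z ∈ unitDisc, φ t z ≠ z

/-- `τ` is the Denjoy-Wolff point of the semigroup `φ`: a boundary point to which
all orbits converge. -/
def IsDenjoyWolff (φ : ℝ → ℂ → ℂ) (τ : ℂ) : Prop :=
  ‖τ‖ = 1 ∧ ∀ z ∈ unitDisc, Tendsto (fun t => φ t z) atTop (𝓝 τ)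

/-- `h` is a Koenigs function of the semigroup `φ`: univalent on the disc with
`h(φ_t(z)) = h(z) + it`. -/
def IsKoenigs (φ : ℝ → ℂ → ℂ) (h : ℂ → ℂ) : Prop :=
  DifferentiableOn ℂ h unitDisc ∧ Set.InjOn h unitDisc ∧
    ∀ t : ℝ, 0 ≤ t → ∀ z ∈ unitDisc, h (φ t z) = h z + Complex.I * t

/-- `p` is the hyperbolic orthogonal projection onto the geodesic `(−1,1)·τ`:
for every `z` in the disc, `p z` lies on the geodesic and minimizes the hyperbolic
distance from `z` to the geodesic. -/
def IsOrthProjection (τ : ℂ) (p : ℂ → ℂ) : Prop :=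
  ∀ z ∈ unitDisc,
    (∃ r : ℝ, r ∈ Set.Ioo (-1 : ℝ) 1 ∧ p z = (r : ℂ) * τ) ∧
    ∀ r : ℝ, r ∈ Set.Ioo (-1 : ℝ) 1 → kD z (p z) ≤ kD z ((r : ℂ) * τ)

/-- The total speed `v(t) = k_𝔻(0, φ_t(0))` of a semigroup. -/
def totalSpeed (φ : ℝ → ℂ → ℂ) (t : ℝ) : ℝ := kD 0 (φ t 0)

/-- The orthogonal speed `v^o(t) = k_𝔻(0, π(φ_t(0)))` of a semigroup, relative to the
orthogonal projection `p` onto the geodesic `(−1,1)·τ`. -/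
def orthSpeed (φ : ℝ → ℂ → ℂ) (p : ℂ → ℂ) (t : ℝ) : ℝ := kD 0 (p (φ t 0))

/-- `δ⁺(t)`: the truncated distance from `z₀ + it` to the part of the complement of `Ω`
lying to the right of the vertical line through `z₀`. -/
def deltaPlus (Ω : Set ℂ) (z₀ : ℂ) (t : ℝ) : ℝ :=
  min t (sInf {d : ℝ | ∃ w : ℂ, w ∉ Ω ∧ z₀.re ≤ w.re ∧ d = ‖w - (z₀ + Complex.I * t)‖})

/-- `δ⁻(t)`: the truncated distance from `z₀ + it` to the part of the complement of `Ω`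
lying to the left of the vertical line through `z₀`. -/
def deltaMinus (Ω : Set ℂ) (z₀ : ℂ) (t : ℝ) : ℝ :=
  min t (sInf {d : ℝ | ∃ w : ℂ, w ∉ Ω ∧ w.re ≤ z₀.re ∧ d = ‖w - (z₀ + Complex.I * t)‖})

/-- `Ω` is quasi-symmetric with respect to vertical axes. -/
def QuasiSymmetric (Ω : Set ℂ) : Prop :=
  ∃ z₀ ∈ Ω, ∃ K : ℝ, 0 < K ∧ ∀ t : ℝ, 0 ≤ t →
    K⁻¹ * deltaMinus Ω z₀ t ≤ deltaPlus Ω z₀ t ∧ deltaPlus Ω z₀ t ≤ K * deltaMinus Ω z₀ t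

/-- `Ω` is starlike with respect to `w₀`: every segment from `w₀` to a point of `Ω`
is contained in `Ω`. -/
def StarlikeWrt (Ω : Set ℂ) (w₀ : ℂ) : Prop :=
  ∀ w ∈ Ω, ∀ s : ℝ, s ∈ Set.Icc (0 : ℝ) 1 → (1 - (s : ℂ)) * w₀ + (s : ℂ) * w ∈ Ω

/-- The orbit of `0` converges non-tangentially to `τ`:
`limsup_{t→+∞} |τ − φ_t(0)|/(1 − |φ_t(0)|) < +∞`. -/
def ConvergesNonTangentially (φ : ℝ → ℂ → ℂ) (τ : ℂ) : Prop :=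
  Filter.limsup (fun t : ℝ =>
    ((‖τ - φ t 0‖ / (1 - ‖φ t 0‖) : ℝ) : EReal)) atTop < ⊤

/-- `f` is eventually non-decreasing. -/
def EventuallyNondecreasing (f : ℝ → ℝ) : Prop :=
  ∃ T : ℝ, ∀ s t : ℝ, T ≤ s → s ≤ t → f s ≤ f t

/-- The Cayley transform from the unit disc to the right half-plane. -/
def cayley (z : ℂ) : ℂ := (1 + z) / (1 - z)

/-- The inverse Cayley transform, from the right half-plane to the unit disc. -/
def cayleyInv (w : ℂ) : ℂ := (w - 1) / (w + 1)

/-- `Θ_ρ := {iy : y ∈ ℝ, |y| ≥ ρ}`, a subset of the imaginary axis. -/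
def Theta (ρ : ℝ) : Set ℂ := {z : ℂ | ∃ y : ℝ, z = Complex.I * (y : ℂ) ∧ ρ ≤ |y|}

/-- `Γ*_t := {iy : |y| ≥ inf_{u ≥ t} ρ_u}`. -/
def GammaStar (ρ : ℝ → ℝ) (t : ℝ) : Set ℂ :=
  {z : ℂ | ∃ y : ℝ, z = Complex.I * (y : ℂ) ∧ sInf {r : ℝ | ∃ u : ℝ, t ≤ u ∧ r = ρ u} ≤ |y|}

/-- The harmonic measure at `w` (a point of the right half-plane) of a Borel subset `E`
of the imaginary axis, with respect to the right half-plane: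
`ω(w,E,ℍ) = (1/π) ∫_{{s : is ∈ E}} Re w/((Re w)² + (Im w − s)²) ds`. -/
def omegaH (w : ℂ) (E : Set ℂ) : ℝ :=
  (1 / Real.pi) *
    ∫ s in {s : ℝ | Complex.I * (s : ℂ) ∈ E}, w.re / (w.re ^ 2 + (w.im - s) ^ 2)

/-- The Euclidean arclength of the closed arc of the unit circle containing `1`
with endpoints `a` and `conj a` (where `Im a > 0`), namely `2·arg a`. -/
def arcLength (a : ℂ) : ℝ := 2 * Complex.arg a

/-- The harmonic measure at `0` with respect to the unit disc of the closed arc of the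
unit circle containing `1` with endpoints `a` and `conj a`: `ℓ(A)/(2π)`. -/
def omegaDiscZero (a : ℂ) : ℝ := arcLength a / (2 * Real.pi)

/-- `Π_α := {z ∈ ℂ : Im z > |Re z|^α}`. -/
def PiDom (α : ℝ) : Set ℂ := {z : ℂ | |z.re| ^ α < z.im}

/-- `W(θ) := {z ≠ 0 : arg z ∈ (π/2 − θ, π/2)}`. -/
def Wsector (θ : ℝ) : Set ℂ :=
  {z : ℂ | z ≠ 0 ∧ Complex.arg z ∈ Set.Ioo (Real.pi / 2 - θ) (Real.pi / 2)}

/-- `Ξ(α,θ) := ({Re z ≤ 0} ∩ Π_α) ∪ W(θ)`. -/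
def Xi (α θ : ℝ) : Set ℂ := ({z : ℂ | z.re ≤ 0} ∩ PiDom α) ∪ Wsector θ

/-! For `0 ≤ s ≤ t`, convexity of `Ω = h(𝔻)` makes `F = h⁻¹ ∘ (h(0) + (s/t)·(h − h(0)))` a
holomorphic self-map of the disc. It fixes `0` and, because `h(φ_t(0)) = h(0) + it`, sends
`φ_t(0)` to `φ_s(0)`. The Schwarz lemma gives `|φ_s(0)| ≤ |φ_t(0)|`, and `v(t) = arctanh |φ_t(0)|`
is increasing in `|φ_t(0)|`. -/

open Function Metric

theorem not_eventually_eq_of_injOn {X Y : Type*} [TopologicalSpace X] {f : X → Y} {U : Set X}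
    {x : X} [(𝓝[≠] x).NeBot] (hU : U ∈ 𝓝 x) (hinj : InjOn f U) :
    ¬ ∀ᶠ y in 𝓝 x, f y = f x := by
  intro hconst
  obtain ⟨y, ⟨hfy, hyU⟩, hyx⟩ := (((hconst.and hU).filter_mono nhdsWithin_le_nhds).and
    (self_mem_nhdsWithin : {x}ᶜ ∈ 𝓝[≠] x)).exists
  exact hyx (hinj hyU (mem_of_mem_nhds hU) hfy)

theorem eventually_eq_of_eventually_deriv_eq_zero {𝕜 E : Type*} [RCLike 𝕜]
    [NormedAddCommGroup E] [NormedSpace 𝕜 E] {f : 𝕜 → E} {x : 𝕜}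
    (hd : ∀ᶠ y in 𝓝 x, DifferentiableAt 𝕜 f y) (h0 : ∀ᶠ y in 𝓝 x, deriv f y = 0) :
    ∀ᶠ y in 𝓝 x, f y = f x := by
  obtain ⟨ε, hε, hball⟩ := eventually_nhds_iff_ball.mp (hd.and h0)
  filter_upwards [ball_mem_nhds x hε] with y hy
  exact isOpen_ball.is_const_of_deriv_eq_zero (convex_ball x ε).isPreconnected
    (fun z hz ↦ (hball z hz).1.differentiableWithinAt) (fun z hz ↦ (hball z hz).2) hy
    (mem_ball_self hε)

section Univalent

variable {f : ℂ → ℂ} {U : Set ℂ} {x : ℂ}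

theorem AnalyticAt.eventually_deriv_ne_zero_of_injOn (hf : AnalyticAt ℂ f x) (hU : U ∈ 𝓝 x)
    (hinj : InjOn f U) : ∀ᶠ y in 𝓝[≠] x, deriv f y ≠ 0 :=
  hf.deriv.eventually_eq_zero_or_eventually_ne_zero.resolve_left fun h0 ↦
    not_eventually_eq_of_injOn hU hinj
      (eventually_eq_of_eventually_deriv_eq_zero
        (hf.eventually_analyticAt.mono fun _ ↦ AnalyticAt.differentiableAt) h0)

theorem AnalyticAt.image_mem_nhds_of_injOn (hf : AnalyticAt ℂ f x) (hU : U ∈ 𝓝 x)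
    (hinj : InjOn f U) {V : Set ℂ} (hV : V ∈ 𝓝 x) : f '' V ∈ 𝓝 (f x) :=
  (hf.eventually_constant_or_nhds_le_map_nhds.resolve_left
    (not_eventually_eq_of_injOn hU hinj)) (image_mem_map hV)

theorem continuousAt_invFunOn_of_injOn (hU : IsOpen U) (hf : AnalyticOnNhd ℂ f U)
    (hinj : InjOn f U) (hx : x ∈ U) : ContinuousAt (invFunOn f U) (f x) := by
  intro V hV
  rw [hinj.leftInvOn_invFunOn hx] at hV
  rw [mem_map]
  filter_upwards [(hf x hx).image_mem_nhds_of_injOn (hU.mem_nhds hx) hinj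
    (inter_mem hV (hU.mem_nhds hx))]
  rintro _ ⟨y, ⟨hyV, hyU⟩, rfl⟩
  rwa [mem_preimage, hinj.leftInvOn_invFunOn hyU]

theorem hasDerivAt_invFunOn_of_injOn (hU : IsOpen U) (hf : AnalyticOnNhd ℂ f U)
    (hinj : InjOn f U) (hx : x ∈ U) (hf' : deriv f x ≠ 0) :
    HasDerivAt (invFunOn f U) (deriv f x)⁻¹ (f x) := by
  refine .of_local_left_inverse (f := f) (continuousAt_invFunOn_of_injOn hU hf hinj hx) ?_ hf' ?_
  · rw [hinj.leftInvOn_invFunOn hx]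
    exact (hf x hx).differentiableAt.hasDerivAt
  · filter_upwards [(hf x hx).image_mem_nhds_of_injOn (hU.mem_nhds hx) hinj (hU.mem_nhds hx)]
      with y hy
    exact invFunOn_eq hy

theorem differentiableAt_invFunOn_of_injOn (hU : IsOpen U) (hf : DifferentiableOn ℂ f U)
    (hinj : InjOn f U) (hx : x ∈ U) : DifferentiableAt ℂ (invFunOn f U) (f x) := by
  have hA := hf.analyticOnNhd hU
  have hcont := continuousAt_invFunOn_of_injOn hU hA hinj hx
  have himg : f '' U ∈ 𝓝 (f x) :=
    (hA x hx).image_mem_nhds_of_injOn (hU.mem_nhds hx) hinj (hU.mem_nhds hx)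
  have hpunct : Tendsto (invFunOn f U) (𝓝[≠] f x) (𝓝[≠] x) := by
    refine tendsto_nhdsWithin_of_tendsto_nhds_of_eventually_within _ ?_ ?_
    · have := hcont.tendsto
      rw [hinj.leftInvOn_invFunOn hx] at this
      exact this.mono_left nhdsWithin_le_nhds
    · filter_upwards [nhdsWithin_le_nhds himg, self_mem_nhdsWithin] with y hy hyx hinv
      exact hyx (by rw [mem_singleton_iff, ← invFunOn_eq hy, mem_singleton_iff.mp hinv])
  -- Where `f' ≠ 0` the inverse function theorem applies; the zeros of `f'` are isolated, and at
  -- them the singularity of the continuous inverse is removable.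
  refine (Complex.analyticAt_of_differentiable_on_punctured_nhds_of_continuousAt ?_
    hcont).differentiableAt
  filter_upwards [nhdsWithin_le_nhds himg,
    hpunct.eventually ((hA x hx).eventually_deriv_ne_zero_of_injOn (hU.mem_nhds hx) hinj)]
  rintro _ ⟨y, hy, rfl⟩ hy'
  rw [hinj.leftInvOn_invFunOn hy] at hy'
  exact (hasDerivAt_invFunOn_of_injOn hU hA hinj hy hy').differentiableAt

end Univalent

theorem norm_le_norm_of_image_mem_segment {h : ℂ → ℂ} {R : ℝ}
    (hd : DifferentiableOn ℂ h (ball 0 R)) (hinj : InjOn h (ball 0 R))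
    (hconv : Convex ℝ (h '' ball 0 R)) {z w : ℂ} (hz : z ∈ ball 0 R) (hw : w ∈ ball 0 R)
    (hzw : h w ∈ segment ℝ (h 0) (h z)) : ‖w‖ ≤ ‖z‖ := by
  have h0 : (0 : ℂ) ∈ ball 0 R := mem_ball_self (pos_of_mem_ball hz)
  rw [segment_eq_image_lineMap] at hzw
  obtain ⟨a, ha, hwa⟩ := hzw
  set G : ℂ → ℂ := fun u ↦ AffineMap.lineMap (h 0) (h u) a
  have hG : MapsTo G (ball 0 R) (h '' ball 0 R) := fun u hu ↦
    hconv.lineMap_mem (mem_image_of_mem h h0) (mem_image_of_mem h hu) ha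
  have hleft := hinj.leftInvOn_invFunOn
  have hF : DifferentiableOn ℂ (invFunOn h (ball 0 R) ∘ G) (ball 0 R) := by
    intro u hu
    obtain ⟨v, hv, hvu⟩ := hG hu
    have hGu : DifferentiableAt ℂ G u := by
      have := hd.differentiableAt (isOpen_ball.mem_nhds hu)
      simp only [G, AffineMap.lineMap_apply_module]
      fun_prop
    have hinv : DifferentiableAt ℂ (invFunOn h (ball 0 R)) (G u) :=
      hvu ▸ differentiableAt_invFunOn_of_injOn isOpen_ball hd hinj hv
    exact (hinv.comp u hGu).differentiableWithinAt
  have hmaps : MapsTo (invFunOn h (ball 0 R) ∘ G) (ball 0 R) (closedBall 0 R) :=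
    fun u hu ↦ ball_subset_closedBall (invFunOn_mem (hG hu))
  have hF0 : (invFunOn h (ball 0 R) ∘ G) 0 = 0 := by
    simp only [comp_apply, G, AffineMap.lineMap_same_apply, hleft h0]
  have hFz : (invFunOn h (ball 0 R) ∘ G) z = w := by
    simp only [comp_apply, G, hwa, hleft hw]
  simpa only [hFz] using Complex.norm_le_norm_of_mapsTo_ball hF hmaps hF0 (mem_ball_zero_iff.mp hz)

theorem arctanh_le_arctanh {a b : ℝ} (ha : -1 < a) (hab : a ≤ b) (hb : b < 1) :
    arctanh a ≤ arctanh b := by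
  unfold arctanh
  have : 0 < (1 + a) / (1 - a) := div_pos (by linarith) (by linarith)
  have : 0 < 1 - b := by linarith
  gcongr
  linarith

theorem kD_zero_left (w : ℂ) : kD 0 w = arctanh ‖w‖ := by
  simp [kD]

theorem unitDisc_eq_ball : unitDisc = ball (0 : ℂ) 1 := by
  ext
  simp [unitDisc]

/-- **Proposition 3.3:** if the image of the Koenigs function is convex, the total speed
is non-decreasing on `[0,+∞)`. -/
theorem totalSpeed_monotoneOn_of_convex
    (φ : ℝ → ℂ → ℂ) (h : ℂ → ℂ)
    (hφ : IsNonElliptic φ) (hKoe : IsKoenigs φ h)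
    (hconv : Convex ℝ (h '' unitDisc)) :
    MonotoneOn (totalSpeed φ) (Set.Ici (0 : ℝ)) := by
  obtain ⟨hd, hinj, hshift⟩ := hKoe
  intro s hs t ht hst
  have h0 : (0 : ℂ) ∈ unitDisc := by simp [unitDisc]
  have hsD := hφ.mapsTo s hs h0
  have htD := hφ.mapsTo t ht h0
  have hseg : h (φ s 0) ∈ segment ℝ (h 0) (h (φ t 0)) := by
    have hscale : s / t * t = s := div_mul_cancel_of_imp fun ht0 ↦ by linarith [mem_Ici.mp hs]
    rw [hshift s hs 0 h0, hshift t ht 0 h0, segment_eq_image_lineMap]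
    refine ⟨s / t, ⟨div_nonneg hs ht, div_le_one_of_le₀ hst ht⟩, ?_⟩
    rw [AffineMap.lineMap_apply, vsub_eq_sub, vadd_eq_add, add_sub_cancel_left, real_smul,
      add_comm, mul_left_comm, ← ofReal_mul, hscale]
  rw [unitDisc_eq_ball] at hd hinj hconv hsD htD
  have hnorm : ‖φ s 0‖ ≤ ‖φ t 0‖ :=
    norm_le_norm_of_image_mem_segment hd hinj hconv htD hsD hseg
  simp only [totalSpeed, kD_zero_left]
  exact arctanh_le_arctanh (by linarith [norm_nonneg (φ s 0)]) hnorm (mem_ball_zero_iff.mp htD)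

end
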